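/- Let R and R' be two CMSR recommendations that differ only in the q-th route: the q-th route of R is (c_1, ..., c_{l-1}) with arrival times s_1 < ... < s_{l-1}, and the q-th route of R' is (c_1, ..., c_l) with the same arrival times extended by t_end > s_{l-1} at the point c_l; all other routes, points and arrival times coincide. Assume that for every route index k ≠ q and every position u on route k with c_{k,u} = c_l, either t_{k,u} < t_end, or t_{k,u} = t_end and k < q (i.e., the q-th taxicab of R' is the last to visit c_l). Then for every outcome u = (u_1, ..., u_K) of R': (i) if 1 ≤ u_q < l then p_{R'}(u) = p_R(u); (ii) if u_q = l then p_{R'}(u) = p_R(u) · P(c_l, Δ_{q,l}), where Δ_{q,l} is the interval at the new tuple (q, l, c_l, t_end) computed in R' under outcome u; (iii) if u_q = l + 1 then p_{R'}(u) = p_R(u - i_q) · (1 - P(c_l, Δ_{q,l})), where i_q is the vector whose q-th entry is 1 and all other entries are 0. -/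
import Mathlib


/-!
CMSR setup for the time-varying outcome probabilities.

Each pick-up point `x : C` carries a passenger-arrival rate `lam x ≥ 0`, and the
pick-up probability after an inter-arrival interval `Δ` is
`P(x, Δ) = 1 - exp (-(lam x * Δ))`.

A recommendation for `K` taxicabs is encoded by lengths `l : Fin K → ℕ`, points
`c : Fin K → ℕ → C` and arrival times `t : Fin K → ℕ → ℝ`; route `k` visits
`c k 1, ..., c k (l k)` at strictly increasing times `t k 1 < ... < t k (l k)`.

An outcome is a vector `u` with `1 ≤ u k ≤ l k + 1`.  Given an outcome `u`, the
interval `Δ_{k,v}(u)` is `t k v` minus the largest arrival time `t k' v'` over tuples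
`(k', v')` with `1 ≤ v' ≤ l k'`, `v' ≤ u k'` (taxicab `k'` is still cruising at `v'`),
`c k' v' = c k v`, and either `t k' v' < t k v`, or `t k' v' = t k v` and `k' < k`;
if no such tuple exists, `Δ_{k,v}(u) = t k v`.

The outcome probability is
`p(u) = ∏_k (∏_{v=1}^{u k - 1} (1 - P(c_{k,v}, Δ_{k,v}(u))))
          * (P(c_{k,u_k}, Δ_{k,u_k}(u)) if u k ≤ l k else 1)`.
-/

/-- Pick-up probability at a point of rate `lam` after an interval `Δ`. -/
noncomputable def pickProb (lam : ℝ) (Δ : ℝ) : ℝ := 1 - Real.exp (-(lam * Δ))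

open scoped Classical in
/-- The arrival time of the last still-cruising taxicab to visit the point `c k v`
strictly before (in the time-then-index order) taxicab `k` reaches its `v`-th point,
given outcome `u`; it is `0` if no such visit exists. -/
noncomputable def prevVisitTime {C : Type*} {K : ℕ} (l : Fin K → ℕ) (c : Fin K → ℕ → C)
    (t : Fin K → ℕ → ℝ) (u : Fin K → ℕ) (k : Fin K) (v : ℕ) : ℝ :=
  let S : Finset (Fin K × ℕ) :=
    (Finset.univ ×ˢ Finset.Icc 1 (Finset.univ.sup l)).filter
      (fun kv => kv.2 ≤ l kv.1 ∧ kv.2 ≤ u kv.1 ∧ c kv.1 kv.2 = c k v ∧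
        (t kv.1 kv.2 < t k v ∨ (t kv.1 kv.2 = t k v ∧ kv.1 < k)))
  if h : S.Nonempty then S.sup' h (fun kv => t kv.1 kv.2) else 0

/-- The inter-arrival interval `Δ_{k,v}(u)` at the `v`-th point of route `k`
under outcome `u`. -/
noncomputable def interArrival {C : Type*} {K : ℕ} (l : Fin K → ℕ) (c : Fin K → ℕ → C)
    (t : Fin K → ℕ → ℝ) (u : Fin K → ℕ) (k : Fin K) (v : ℕ) : ℝ :=
  t k v - prevVisitTime l c t u k v

/-- The probability `p(u)` of outcome `u` for the recommendation `(l, c, t)`. -/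
noncomputable def outcomeProb {C : Type*} {K : ℕ} (lam : C → ℝ) (l : Fin K → ℕ)
    (c : Fin K → ℕ → C) (t : Fin K → ℕ → ℝ) (u : Fin K → ℕ) : ℝ :=
  ∏ k : Fin K,
    ((∏ v ∈ Finset.Icc 1 (u k - 1),
        (1 - pickProb (lam (c k v)) (interArrival l c t u k v))) *
      (if u k ≤ l k then pickProb (lam (c k (u k))) (interArrival l c t u k (u k))
        else 1))


open scoped Classical in
lemma prevVisitTime_congr {C : Type*} {K : ℕ} {l l' : Fin K → ℕ} {c : Fin K → ℕ → C}
    {t : Fin K → ℕ → ℝ} {u u' : Fin K → ℕ} {k : Fin K} {v : ℕ}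
    (h : ∀ k' : Fin K, ∀ v' : ℕ, 1 ≤ v' →
      ((v' ≤ l k' ∧ v' ≤ u k' ∧ c k' v' = c k v ∧
        (t k' v' < t k v ∨ (t k' v' = t k v ∧ k' < k))) ↔
       (v' ≤ l' k' ∧ v' ≤ u' k' ∧ c k' v' = c k v ∧
        (t k' v' < t k v ∨ (t k' v' = t k v ∧ k' < k))))) :
    prevVisitTime l c t u k v = prevVisitTime l' c t u' k v := by
  unfold prevVisitTime
  have hS : (Finset.univ ×ˢ Finset.Icc 1 (Finset.univ.sup l)).filter
      (fun kv => kv.2 ≤ l kv.1 ∧ kv.2 ≤ u kv.1 ∧ c kv.1 kv.2 = c k v ∧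
        (t kv.1 kv.2 < t k v ∨ (t kv.1 kv.2 = t k v ∧ kv.1 < k))) =
      (Finset.univ ×ˢ Finset.Icc 1 (Finset.univ.sup l')).filter
      (fun kv => kv.2 ≤ l' kv.1 ∧ kv.2 ≤ u' kv.1 ∧ c kv.1 kv.2 = c k v ∧
        (t kv.1 kv.2 < t k v ∨ (t kv.1 kv.2 = t k v ∧ kv.1 < k))) := by
    ext kv
    simp only [Finset.mem_filter, Finset.mem_product, Finset.mem_univ, true_and,
      Finset.mem_Icc]
    constructor
    · rintro ⟨⟨h1, -⟩, h2⟩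
      obtain ⟨a, b, cc, d⟩ := (h kv.1 kv.2 h1).mp h2
      exact ⟨⟨h1, le_trans a (Finset.le_sup (Finset.mem_univ _))⟩, a, b, cc, d⟩
    · rintro ⟨⟨h1, -⟩, h2⟩
      obtain ⟨a, b, cc, d⟩ := (h kv.1 kv.2 h1).mpr h2
      exact ⟨⟨h1, le_trans a (Finset.le_sup (Finset.mem_univ _))⟩, a, b, cc, d⟩
  rw [hS]


set_option maxHeartbeats 1000000 in
/-- Sequential equation for `p`.
Let `R` and `R'` be two CMSR recommendations that differ only in the `q`-th route:
the `q`-th route of `R` is `(c_1, ..., c_{l-1})` and that of `R'` is `(c_1, ..., c_l)`,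
with the same arrival times extended by `t_end`; all other routes, points and arrival
times coincide.  Here both recommendations share the points `c` and times `t`, `R` has
lengths `l` and `R'` has lengths `Function.update l q (l q + 1)`, so the new point is
`c_l = c q (l q + 1)` visited at `t_end = t q (l q + 1)`, and the arrival times along
each route of `R'` are strictly increasing (in particular `t_end > s_{l-1}`).

Assume (hypothesis `hlast`) that for every route `k ≠ q` and every position `v` on
route `k` with `c k v = c_l`, either `t k v < t_end`, or `t k v = t_end` and `k < q`
(i.e. the `q`-th taxicab of `R'` is the last to visit `c_l`).

Then for every outcome `u = (u_1, ..., u_K)` of `R'`: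
(i)   if `1 ≤ u q < l q + 1` then `p_{R'}(u) = p_R(u)`;
(ii)  if `u q = l q + 1` then `p_{R'}(u) = p_R(u) * P(c_l, Δ_{q,l})`, where
      `Δ_{q,l}` is the interval at the new tuple `(q, l q + 1, c_l, t_end)` computed
      in `R'` under outcome `u`;
(iii) if `u q = l q + 2` then `p_{R'}(u) = p_R(u - i_q) * (1 - P(c_l, Δ_{q,l}))`,
      where `u - i_q` decreases the `q`-th entry of `u` by one. -/
theorem cmsr_sequential_equation_for_p {C : Type*} {K : ℕ}
    (lam : C → ℝ) (hlam : ∀ x, 0 ≤ lam x)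
    (l : Fin K → ℕ) (c : Fin K → ℕ → C) (t : Fin K → ℕ → ℝ) (q : Fin K)
    (ht : ∀ (k : Fin K) (v : ℕ), 1 ≤ v → v < Function.update l q (l q + 1) k →
      t k v < t k (v + 1))
    (hlast : ∀ k : Fin K, k ≠ q → ∀ v : ℕ, 1 ≤ v → v ≤ l k →
      c k v = c q (l q + 1) →
      (t k v < t q (l q + 1) ∨ (t k v = t q (l q + 1) ∧ k < q)))
    (u : Fin K → ℕ) (hu : ∀ k, 1 ≤ u k ∧ u k ≤ Function.update l q (l q + 1) k + 1) :
    (1 ≤ u q ∧ u q < l q + 1 →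
      outcomeProb lam (Function.update l q (l q + 1)) c t u =
        outcomeProb lam l c t u) ∧
    (u q = l q + 1 →
      outcomeProb lam (Function.update l q (l q + 1)) c t u =
        outcomeProb lam l c t u *
          pickProb (lam (c q (l q + 1)))
            (interArrival (Function.update l q (l q + 1)) c t u q (l q + 1))) ∧
    (u q = l q + 2 →
      outcomeProb lam (Function.update l q (l q + 1)) c t u =
        outcomeProb lam l c t (Function.update u q (u q - 1)) *
          (1 - pickProb (lam (c q (l q + 1)))
            (interArrival (Function.update l q (l q + 1)) c t u q (l q + 1)))) := by
  set l' := Function.update l q (l q + 1) with hl'def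
  have hl'q : l' q = l q + 1 := Function.update_self _ _ _
  have hl'ne : ∀ k, k ≠ q → l' k = l k := fun k hk => Function.update_of_ne hk _ _
  -- times along route q are strictly increasing up to t q (l q + 1)
  have key : ∀ w, w ≤ l q + 1 → ∀ v, 1 ≤ v → v < w → t q v < t q w := by
    intro w
    induction w with
    | zero => intro _ v _ hv; omega
    | succ n ih =>
      intro hw v h1 hv
      have hlt : n < l' q := by rw [hl'q]; omega
      rcases Nat.lt_succ_iff_lt_or_eq.mp hv with h | h
      · exact (ih (by omega) v h1 h).trans (ht q n (by omega) hlt)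
      · subst h; exact ht q v h1 hlt
  -- the new tuple (q, l q + 1) is never a valid "previous visit" at a relevant position
  have hexcl : ∀ (k : Fin K) (v : ℕ), 1 ≤ v → (k ≠ q → v ≤ l k) → (k = q → v ≤ l q + 1) →
      ¬ (c q (l q + 1) = c k v ∧
        (t q (l q + 1) < t k v ∨ (t q (l q + 1) = t k v ∧ q < k))) := by
    rintro k v h1 hne heq ⟨hc, hT⟩
    by_cases hk : k = q
    · subst hk
      rcases Nat.eq_or_lt_of_le (heq rfl) with hv | hv
      · subst hv
        rcases hT with h | ⟨-, h⟩
        · exact lt_irrefl _ h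
        · exact lt_irrefl _ h
      · have hlt : t k v < t k (l k + 1) := key (l k + 1) le_rfl v h1 hv
        rcases hT with h | ⟨h, -⟩
        · linarith
        · linarith
    · rcases hlast k hk v h1 (hne hk) hc.symm with h | ⟨h, hkq⟩
      · rcases hT with h' | ⟨h', -⟩ <;> linarith
      · rcases hT with h' | ⟨-, hq'⟩
        · linarith
        · exact absurd hq' (lt_asymm hkq)
  -- main congruence for prevVisitTime / interArrival
  have hprev : ∀ (u'' : Fin K → ℕ), (∀ k, k ≠ q → u'' k = u k) →
      (∀ v' : ℕ, (v' ≤ l q + 1 ∧ v' ≤ u q ∧ v' ≠ l q + 1) ↔ (v' ≤ l q ∧ v' ≤ u'' q)) →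
      ∀ (k : Fin K) (v : ℕ), 1 ≤ v → (k ≠ q → v ≤ l k) → (k = q → v ≤ l q + 1) →
      interArrival l' c t u k v = interArrival l c t u'' k v := by
    intro u'' hoff hq k v h1 hne heq
    unfold interArrival
    congr 1
    apply prevVisitTime_congr
    intro k' v' h1'
    by_cases hk' : k' = q
    · subst hk'
      rw [hl'q]
      constructor
      · rintro ⟨a, b, cc, d⟩
        by_cases hv' : v' = l k' + 1
        · subst hv'
          exact absurd ⟨cc, d⟩ (hexcl k v h1 hne heq)
        · obtain ⟨a', b'⟩ := (hq v').mp ⟨a, b, hv'⟩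
          exact ⟨a', b', cc, d⟩
      · rintro ⟨a, b, cc, d⟩
        obtain ⟨a', b', -⟩ := (hq v').mpr ⟨a, b⟩
        exact ⟨a', b', cc, d⟩
    · rw [hl'ne k' hk', hoff k' hk']
  have huk : ∀ k, k ≠ q → u k ≤ l k + 1 := by
    intro k hk
    have := (hu k).2
    rwa [hl'ne k hk] at this
  have hu1 : ∀ k, 1 ≤ u k := fun k => (hu k).1
  refine ⟨?_, ?_, ?_⟩
  -- case (i)
  · rintro ⟨-, hlt⟩
    have huq : u q ≤ l q := by omega
    have hq1 : ∀ v' : ℕ, (v' ≤ l q + 1 ∧ v' ≤ u q ∧ v' ≠ l q + 1) ↔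
        (v' ≤ l q ∧ v' ≤ u q) := by intro v'; omega
    unfold outcomeProb
    apply Finset.prod_congr rfl
    intro k _
    refine congr_arg₂ (· * ·) ?_ ?_
    · apply Finset.prod_congr rfl
      intro v hv
      rw [Finset.mem_Icc] at hv
      rw [hprev u (fun _ _ => rfl) hq1 k v hv.1
        (fun hk => by have := huk k hk; omega) (fun hk => by subst hk; omega)]
    · by_cases hk : k = q
      · subst hk
        rw [hl'q, if_pos (by omega : u k ≤ l k + 1), if_pos huq,
          hprev u (fun _ _ => rfl) hq1 k (u k) (hu1 k)
            (fun h => absurd rfl h) (fun _ => by omega)]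
      · rw [hl'ne k hk]
        by_cases h : u k ≤ l k
        · rw [if_pos h, if_pos h,
            hprev u (fun _ _ => rfl) hq1 k (u k) (hu1 k)
              (fun _ => h) (fun h' => absurd h' hk)]
        · rw [if_neg h, if_neg h]
  -- case (ii)
  · intro h2
    have hq2 : ∀ v' : ℕ, (v' ≤ l q + 1 ∧ v' ≤ u q ∧ v' ≠ l q + 1) ↔
        (v' ≤ l q ∧ v' ≤ u q) := by intro v'; omega
    unfold outcomeProb
    rw [← Finset.mul_prod_erase Finset.univ _ (Finset.mem_univ q),
      ← Finset.mul_prod_erase Finset.univ _ (Finset.mem_univ q)]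
    have hrest : ∀ k ∈ Finset.univ.erase q,
        (∏ v ∈ Finset.Icc 1 (u k - 1),
          (1 - pickProb (lam (c k v)) (interArrival l' c t u k v))) *
        (if u k ≤ l' k then pickProb (lam (c k (u k))) (interArrival l' c t u k (u k))
          else 1) =
        (∏ v ∈ Finset.Icc 1 (u k - 1),
          (1 - pickProb (lam (c k v)) (interArrival l c t u k v))) *
        (if u k ≤ l k then pickProb (lam (c k (u k))) (interArrival l c t u k (u k))
          else 1) := by
      intro k hk
      have hkq : k ≠ q := (Finset.mem_erase.mp hk).1
      refine congr_arg₂ (· * ·) ?_ ?_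
      · apply Finset.prod_congr rfl
        intro v hv
        rw [Finset.mem_Icc] at hv
        rw [hprev u (fun _ _ => rfl) hq2 k v hv.1
          (fun _ => by have := huk k hkq; omega) (fun h' => absurd h' hkq)]
      · rw [hl'ne k hkq]
        by_cases h : u k ≤ l k
        · rw [if_pos h, if_pos h,
            hprev u (fun _ _ => rfl) hq2 k (u k) (hu1 k)
              (fun _ => h) (fun h' => absurd h' hkq)]
        · rw [if_neg h, if_neg h]
    rw [Finset.prod_congr rfl hrest]
    have hfq : (∏ v ∈ Finset.Icc 1 (u q - 1),
          (1 - pickProb (lam (c q v)) (interArrival l' c t u q v))) *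
        (if u q ≤ l' q then pickProb (lam (c q (u q))) (interArrival l' c t u q (u q))
          else 1) =
        ((∏ v ∈ Finset.Icc 1 (u q - 1),
          (1 - pickProb (lam (c q v)) (interArrival l c t u q v))) *
        (if u q ≤ l q then pickProb (lam (c q (u q))) (interArrival l c t u q (u q))
          else 1)) *
        pickProb (lam (c q (l q + 1))) (interArrival l' c t u q (l q + 1)) := by
      rw [if_pos (by rw [hl'q]; omega), if_neg (by omega), mul_one, h2]
      refine congr_arg₂ (· * ·) ?_ rfl
      apply Finset.prod_congr rfl
      intro v hv
      rw [Finset.mem_Icc] at hv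
      rw [hprev u (fun _ _ => rfl) hq2 q v hv.1
        (fun h' => absurd rfl h') (fun _ => by omega)]
    rw [hfq]; ring
  -- case (iii)
  · intro h3
    set u'' := Function.update u q (u q - 1) with hu''def
    have hu''q : u'' q = l q + 1 := by rw [hu''def, Function.update_self, h3]; omega
    have hoff : ∀ k, k ≠ q → u'' k = u k := fun k hk => Function.update_of_ne hk _ _
    have hq3 : ∀ v' : ℕ, (v' ≤ l q + 1 ∧ v' ≤ u q ∧ v' ≠ l q + 1) ↔
        (v' ≤ l q ∧ v' ≤ u'' q) := by intro v'; rw [hu''q]; omega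
    unfold outcomeProb
    rw [← Finset.mul_prod_erase Finset.univ _ (Finset.mem_univ q),
      ← Finset.mul_prod_erase Finset.univ _ (Finset.mem_univ q)]
    have hrest : ∀ k ∈ Finset.univ.erase q,
        (∏ v ∈ Finset.Icc 1 (u k - 1),
          (1 - pickProb (lam (c k v)) (interArrival l' c t u k v))) *
        (if u k ≤ l' k then pickProb (lam (c k (u k))) (interArrival l' c t u k (u k))
          else 1) =
        (∏ v ∈ Finset.Icc 1 (u'' k - 1),
          (1 - pickProb (lam (c k v)) (interArrival l c t u'' k v))) *
        (if u'' k ≤ l k then pickProb (lam (c k (u'' k)))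
          (interArrival l c t u'' k (u'' k)) else 1) := by
      intro k hk
      have hkq : k ≠ q := (Finset.mem_erase.mp hk).1
      rw [hoff k hkq]
      refine congr_arg₂ (· * ·) ?_ ?_
      · apply Finset.prod_congr rfl
        intro v hv
        rw [Finset.mem_Icc] at hv
        rw [hprev u'' hoff hq3 k v hv.1
          (fun _ => by have := huk k hkq; omega) (fun h' => absurd h' hkq)]
      · rw [hl'ne k hkq]
        by_cases h : u k ≤ l k
        · rw [if_pos h, if_pos h,
            hprev u'' hoff hq3 k (u k) (hu1 k)
              (fun _ => h) (fun h' => absurd h' hkq)]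
        · rw [if_neg h, if_neg h]
    rw [Finset.prod_congr rfl hrest]
    have hfq : (∏ v ∈ Finset.Icc 1 (u q - 1),
          (1 - pickProb (lam (c q v)) (interArrival l' c t u q v))) *
        (if u q ≤ l' q then pickProb (lam (c q (u q))) (interArrival l' c t u q (u q))
          else 1) =
        ((∏ v ∈ Finset.Icc 1 (u'' q - 1),
          (1 - pickProb (lam (c q v)) (interArrival l c t u'' q v))) *
        (if u'' q ≤ l q then pickProb (lam (c q (u'' q)))
          (interArrival l c t u'' q (u'' q)) else 1)) *
        (1 - pickProb (lam (c q (l q + 1))) (interArrival l' c t u q (l q + 1))) := by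
      rw [if_neg (by rw [hl'q]; omega), if_neg (by rw [hu''q]; omega), mul_one, mul_one,
        hu''q, h3]
      have h21 : l q + 2 - 1 = l q + 1 := by omega
      have h11 : l q + 1 - 1 = l q := by omega
      rw [h21, h11, Finset.prod_Icc_succ_top (by omega : 1 ≤ l q + 1)]
      refine congr_arg₂ (· * ·) ?_ rfl
      apply Finset.prod_congr rfl
      intro v hv
      rw [Finset.mem_Icc] at hv
      rw [hprev u'' hoff hq3 q v hv.1
        (fun h' => absurd rfl h') (fun _ => by omega)]
    rw [hfq]; ring
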